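/- arXiv:2406.07995 — 3 statements merged into one kernel-verified Lean document; each statement's English description precedes it below -/
import Mathlib

section
/- Let E : V → ℝ be a functional on a lattice-ordered vector space of functions that is submodular, i.e., E(u∨v) + E(u∧v) ≤ E(u) + E(v), strictly convex, and Gateaux differentiable with differential A. Then A is strictly T-monotone: for all u, v with (u−v)_+ ≠ 0, ⟨A(u) − A(v), (u−v)_+⟩ > 0. -/
private lemma comp_affine_strictConvex {α : Type*} {E : (α → ℝ) → ℝ}
    (hconv : StrictConvexOn ℝ Set.univ E) (c w : α → ℝ) (hw : w ≠ 0) :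
    StrictConvexOn ℝ Set.univ (fun t : ℝ => E (c + t • w)) := by
  refine ⟨convex_univ, fun s _ t _ hst a b ha hb hab => ?_⟩
  have hne : c + s • w ≠ c + t • w := by
    intro hEq
    obtain ⟨x, hx⟩ : ∃ x, w x ≠ 0 := by
      by_contra hall
      push_neg at hall
      exact hw (funext hall)
    have := congrFun hEq x
    simp only [Pi.add_apply, Pi.smul_apply, smul_eq_mul] at this
    exact hst (mul_right_cancel₀ hx (by linarith))
  have key := hconv.2 (Set.mem_univ (c + s • w)) (Set.mem_univ (c + t • w)) hne ha hb hab
  have harg : a • (c + s • w) + b • (c + t • w) = c + (a • s + b • t) • w := by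
    funext x
    simp only [Pi.add_apply, Pi.smul_apply, smul_eq_mul]
    linear_combination c x * hab
  rw [harg] at key
  simpa using key

/-- A submodular, strictly convex, Gateaux differentiable functional has a
strictly T-monotone differential:
`⟨A u - A v, (u - v)_+⟩ > 0` unless `u ≤ v` pointwise. -/
theorem stmt7 {α : Type*} (E : (α → ℝ) → ℝ) (A : (α → ℝ) → (α → ℝ) →ₗ[ℝ] ℝ)
    (hsub : ∀ u v : α → ℝ, E (u ⊔ v) + E (u ⊓ v) ≤ E u + E v)
    (hconv : StrictConvexOn ℝ Set.univ E)
    (hdiff : ∀ u φ : α → ℝ, HasDerivAt (fun τ : ℝ => E (u + τ • φ)) (A u φ) 0)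
    (u v : α → ℝ) (h : ∃ x, v x < u x) :
    0 < A u (fun x => max (u x - v x) 0) - A v (fun x => max (u x - v x) 0) := by
  obtain ⟨x₀, hx₀⟩ := h
  set w : α → ℝ := fun x => max (u x - v x) 0 with hw_def
  have hw : w ≠ 0 := by
    intro hEq
    have := congrFun hEq x₀
    simp only [hw_def, Pi.zero_apply] at this
    have : u x₀ - v x₀ ≤ 0 := by
      by_contra hc
      push_neg at hc
      rw [max_eq_left hc.le] at this
      linarith
    linarith
  have hnegw : (-w : α → ℝ) ≠ 0 := by
    simpa [neg_eq_zero] using hw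
  -- φ t = E (u + t • (-w)) + E (v + t • w)
  set φ : ℝ → ℝ := fun t => E (u + t • (-w)) + E (v + t • w) with hφ_def
  have hφconv : StrictConvexOn ℝ Set.univ φ :=
    (comp_affine_strictConvex hconv u (-w) hnegw).add
      (comp_affine_strictConvex hconv v w hw)
  have hφderiv : HasDerivAt φ (A u (-w) + A v w) 0 :=
    (hdiff u (-w)).add (hdiff v w)
  have hslope := hφconv.lt_slope_of_hasDerivAt (Set.mem_univ (0:ℝ)) (Set.mem_univ (1:ℝ))
    one_pos hφderiv
  rw [slope_def_field] at hslope
  norm_num at hslope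
  -- φ 1 ≤ φ 0 by submodularity
  have hmeet : u + (1:ℝ) • (-w) = u ⊓ v := by
    funext x
    simp only [Pi.add_apply, Pi.smul_apply, Pi.neg_apply, one_smul, Pi.inf_apply, hw_def]
    rcases le_total (u x) (v x) with hle | hle
    · rw [max_eq_right (by linarith), min_eq_left hle]; ring
    · rw [max_eq_left (by linarith), min_eq_right hle]; ring
  have hjoin : v + (1:ℝ) • w = u ⊔ v := by
    funext x
    simp only [Pi.add_apply, Pi.smul_apply, one_smul, Pi.sup_apply, hw_def]
    rcases le_total (u x) (v x) with hle | hle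
    · rw [max_eq_right (by linarith), max_eq_right hle]; ring
    · rw [max_eq_left (by linarith), max_eq_left hle]; ring
  have hφ1 : φ 1 ≤ φ 0 := by
    have := hsub u v
    simp only [hφ_def, hmeet, hjoin, zero_smul, add_zero]
    linarith
  have hφ0 : φ 0 = E u + E v := by
    simp [hφ_def]
  linarith [hslope, hφ1]
end

section
/- For t ≥ 2 and real numbers a, b, c, d with a' = max(a,c), b' = max(b,d), a'' = min(a,c), b'' = min(b,d), one has |a'−b'|^t + |a''−b''|^t ≤ |a−b|^t + |c−d|^t. -/
/-!
The inequality holds with `|·| ^ t` replaced by any convex `f`. By symmetry `c ≤ a`; the only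
nontrivial case is `b ≤ d`, where `c - d ≤ a - d, c - b ≤ a - b` and both pairs have the same
sum, so the claim is that pulling two points towards each other with fixed sum does not increase
`f x + f y`.
-/

open Set

lemma convexOn_abs_rpow {p : ℝ} (hp : 1 ≤ p) : ConvexOn ℝ univ fun x : ℝ => |x| ^ p := by
  refine ⟨convex_univ, fun x _ y _ a b ha hb hab => ?_⟩
  calc |a • x + b • y| ^ p ≤ (a * |x| + b * |y|) ^ p := by
        gcongr
        simpa [abs_mul, abs_of_nonneg ha, abs_of_nonneg hb] using abs_add_le (a * x) (b * y)
    _ ≤ a • |x| ^ p + b • |y| ^ p :=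
        (convexOn_rpow hp).2 (abs_nonneg x) (abs_nonneg y) ha hb hab

lemma ConvexOn.add_le_add_of_mem_Icc {s : Set ℝ} {f : ℝ → ℝ} (hf : ConvexOn ℝ s f)
    {x y z : ℝ} (hx : x ∈ s) (hy : y ∈ s) (hz : z ∈ Icc y x) :
    f z + f (x + y - z) ≤ f x + f y := by
  rw [← segment_eq_Icc (hz.1.trans hz.2)] at hz
  obtain ⟨a, b, ha, hb, hab, rfl⟩ := hz
  have hswap : x + y - (a • y + b • x) = b • y + a • x := by
    simp only [smul_eq_mul]; linear_combination -(x + y) * hab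
  rw [hswap]
  have h₁ := hf.2 hy hx ha hb hab
  have h₂ := hf.2 hy hx hb ha (by linarith)
  simp only [smul_eq_mul] at h₁ h₂ ⊢
  linear_combination h₁ + h₂ + (f x + f y) * hab

lemma ConvexOn.map_max_sub_max_add_map_min_sub_min_le {f : ℝ → ℝ} (hf : ConvexOn ℝ univ f)
    (a b c d : ℝ) :
    f (max a c - max b d) + f (min a c - min b d) ≤ f (a - b) + f (c - d) := by
  wlog hca : c ≤ a generalizing a b c d
  · simpa only [max_comm, min_comm, add_comm (f (a - b))] using this c d a b (le_of_not_ge hca)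
  rcases le_total d b with hdb | hbd
  · simp [max_eq_left hca, max_eq_left hdb, min_eq_right hca, min_eq_right hdb]
  · rw [max_eq_left hca, max_eq_right hbd, min_eq_right hca, min_eq_left hbd]
    have key := hf.add_le_add_of_mem_Icc (mem_univ (a - b)) (mem_univ (c - d))
      (z := a - d) ⟨by linarith, by linarith⟩
    rwa [show a - b + (c - d) - (a - d) = c - b by ring] at key

/-- Scalar submodularity inequality for `(x,y) ↦ |x - y|^t`, `t ≥ 2`. -/
theorem stmt9 (t : ℝ) (ht : 2 ≤ t) (a b c d : ℝ) :
    |max a c - max b d| ^ t + |min a c - min b d| ^ t ≤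
      |a - b| ^ t + |c - d| ^ t :=
  (convexOn_abs_rpow (by linarith)).map_max_sub_max_add_map_min_sub_min_le a b c d
end

section
/- Let s ∈ (0,1), q > 1 with sq < 1, and Ω ⊂ ℝ^N bounded with C^{1,1} boundary. Then the function d_Ω^s belongs to W^{s,q}(Ω'), for any bounded open Ω' ⊇ Ω; more precisely ∫_{Ω'×Ω'} |d_Ω(x)^s − d_Ω(y)^s|^q / |x−y|^{N+sq} dx dy < ∞. -/
/-!
Write `d = infDist · Ωᶜ` and let `d y ≤ d x = r`. Since `d` is `1`-Lipschitz and `t ↦ t ^ s` is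
concave with value `0` at `0`, `|d x ^ s - d y ^ s| ≤ r ^ s * min 1 (|x - y| / r)`, so the
Gagliardo integrand is at most `r ^ (-N) * K (|x - y| / r)` with
`K ρ = min 1 ρ ^ q / ρ ^ (N + s q)`. The radial function `K ‖z‖` is integrable on `ℝ^N`
(it behaves like `‖z‖ ^ (q - s q - N)` at `0` and like `‖z‖ ^ (-N - s q)` at infinity), and by
translation and dilation `∫ r ^ (-N) * K (|x - y| / r) dy = ∫ K ‖z‖ dz` for every `x`.
Integrating over `x ∈ Ω'` bounds the Gagliardo integral by `2 |Ω'| ∫ K ‖z‖ dz`.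
-/

open MeasureTheory Metric Set Module

theorem Real.rpow_sub_rpow_le_rpow_mul_min {s r e δ : ℝ} (hs₀ : 0 ≤ s) (hs₁ : s ≤ 1)
    (he : 0 ≤ e) (her : e ≤ r) (hδ : r - e ≤ δ) :
    r ^ s - e ^ s ≤ r ^ s * min 1 (δ / r) := by
  rcases (he.trans her).eq_or_lt with rfl | hr
  · obtain rfl : e = 0 := le_antisymm her he
    simp
  have hes : 0 ≤ e ^ s := Real.rpow_nonneg he s
  have hrs : 0 ≤ r ^ s := Real.rpow_nonneg hr.le s
  rw [mul_min_of_nonneg _ _ hrs, mul_one, le_min_iff]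
  refine ⟨by linarith, ?_⟩
  have hratio : e / r ≤ (e / r) ^ s := by
    simpa using Real.rpow_le_rpow_of_exponent_ge' (div_nonneg he hr.le)
      ((div_le_one hr).2 her) hs₀ hs₁
  have key : r ^ s * (e / r) ≤ e ^ s := by
    calc r ^ s * (e / r) ≤ r ^ s * (e / r) ^ s := mul_le_mul_of_nonneg_left hratio hrs
      _ = e ^ s := by
        rw [Real.div_rpow he hr.le, mul_div_cancel₀ _ (Real.rpow_pos_of_pos hr s).ne']
  calc r ^ s - e ^ s ≤ r ^ s * ((r - e) / r) := by
        rw [sub_div, div_self hr.ne', mul_sub, mul_one]; linarith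
    _ ≤ r ^ s * (δ / r) := by gcongr

theorem abs_infDist_rpow_sub_le {α : Type*} [PseudoMetricSpace α] (S : Set α) {s : ℝ}
    (hs₀ : 0 ≤ s) (hs₁ : s ≤ 1) {x y : α} (hxy : infDist y S ≤ infDist x S) :
    |infDist x S ^ s - infDist y S ^ s| ≤ infDist x S ^ s * min 1 (dist x y / infDist x S) := by
  rw [abs_of_nonneg (sub_nonneg.2 (Real.rpow_le_rpow infDist_nonneg hxy hs₀))]
  refine Real.rpow_sub_rpow_le_rpow_mul_min hs₀ hs₁ infDist_nonneg hxy ?_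
  linarith [infDist_le_infDist_add_dist (s := S) (x := x) (y := y)]

noncomputable def gagliardoKernel (n : ℕ) (s q ρ : ℝ) : ℝ :=
  min 1 ρ ^ q / ρ ^ ((n : ℝ) + s * q)

theorem gagliardoKernel_nonneg (n : ℕ) (s q : ℝ) {ρ : ℝ} (hρ : 0 ≤ ρ) :
    0 ≤ gagliardoKernel n s q ρ := by
  have : 0 ≤ min 1 ρ := le_min zero_le_one hρ
  unfold gagliardoKernel
  positivity

theorem gagliardoKernel_zero (n : ℕ) (s : ℝ) {q : ℝ} (hq : q ≠ 0) :
    gagliardoKernel n s q 0 = 0 := by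
  simp [gagliardoKernel, Real.zero_rpow hq]

noncomputable def rescaledGagliardoKernel {α : Type*} [PseudoMetricSpace α] (S : Set α) (n : ℕ)
    (s q : ℝ) (x y : α) : ℝ :=
  gagliardoKernel n s q (dist x y / infDist x S) / infDist x S ^ n

theorem gagliardo_integrand_infDist_rpow_le {α : Type*} [PseudoMetricSpace α] (S : Set α)
    (n : ℕ) {s q : ℝ} (hs₀ : 0 ≤ s) (hs₁ : s ≤ 1) (hq : 0 < q) {x y : α}
    (hxy : infDist y S ≤ infDist x S) :
    |infDist x S ^ s - infDist y S ^ s| ^ q / dist x y ^ ((n : ℝ) + s * q)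
      ≤ rescaledGagliardoKernel S n s q x y := by
  unfold rescaledGagliardoKernel
  set r := infDist x S
  set D := dist x y
  have hm : 0 ≤ min 1 (D / r) := le_min zero_le_one (div_nonneg dist_nonneg infDist_nonneg)
  have hbound : |r ^ s - infDist y S ^ s| ^ q / D ^ ((n : ℝ) + s * q)
      ≤ (r ^ s * min 1 (D / r)) ^ q / D ^ ((n : ℝ) + s * q) := by
    gcongr
    exact abs_infDist_rpow_sub_le S hs₀ hs₁ hxy
  refine hbound.trans ?_
  -- if `r = 0` or `D = 0` then `D / r = 0`, and the bound collapses to `0`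
  rcases (div_nonneg dist_nonneg infDist_nonneg : 0 ≤ D / r).eq_or_lt with hρ | hρ
  · rw [← hρ, min_eq_right zero_le_one, mul_zero, Real.zero_rpow hq.ne', zero_div]
    exact div_nonneg (gagliardoKernel_nonneg n s q le_rfl) (pow_nonneg infDist_nonneg n)
  obtain ⟨hD, hr⟩ : 0 < D ∧ 0 < r := by
    rcases div_pos_iff.1 hρ with h | h
    · exact h
    · exact absurd h.1 (not_lt.2 dist_nonneg)
  refine le_of_eq ?_
  unfold gagliardoKernel
  rw [Real.mul_rpow (by positivity) hm, ← Real.rpow_mul hr.le, Real.div_rpow hD.le hr.le,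
    Real.rpow_add hr, Real.rpow_natCast]
  field_simp

@[fun_prop]
theorem measurable_gagliardoKernel (n : ℕ) (s q : ℝ) : Measurable (gagliardoKernel n s q) := by
  unfold gagliardoKernel
  fun_prop

theorem pow_mul_gagliardoKernel {n : ℕ} (hn : 1 ≤ n) (s q : ℝ) {ρ : ℝ} (hρ : 0 < ρ) :
    ρ ^ (n - 1) * gagliardoKernel n s q ρ = min 1 ρ ^ q * ρ ^ (-1 - s * q) := by
  unfold gagliardoKernel
  rw [← Real.rpow_natCast, Nat.cast_sub hn, mul_div_assoc', mul_comm, mul_div_assoc,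
    ← Real.rpow_sub hρ, Nat.cast_one]
  ring_nf

theorem integrableOn_Ioi_pow_mul_gagliardoKernel {n : ℕ} (hn : 1 ≤ n) {s q : ℝ}
    (hsq₀ : 0 < s * q) (hsq₁ : s * q < q) :
    IntegrableOn (fun ρ : ℝ => ρ ^ (n - 1) * gagliardoKernel n s q ρ) (Ioi 0) := by
  rw [← Ioc_union_Ioi_eq_Ioi zero_le_one, integrableOn_union]
  constructor
  · have : IntegrableOn (fun ρ : ℝ => ρ ^ (q - s * q - 1)) (Ioc 0 1) :=
      (intervalIntegral.intervalIntegrable_rpow' (by linarith)).1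
    refine this.congr_fun (fun ρ hρ => ?_) measurableSet_Ioc
    simp only
    rw [pow_mul_gagliardoKernel hn s q hρ.1, min_eq_right hρ.2, ← Real.rpow_add hρ.1]
    ring_nf
  · refine (integrableOn_Ioi_rpow_of_lt (by linarith : -1 - s * q < -1) zero_lt_one).congr_fun
      (fun ρ hρ => ?_) measurableSet_Ioi
    simp only
    rw [pow_mul_gagliardoKernel hn s q (zero_lt_one.trans hρ), min_eq_left (le_of_lt hρ),
      Real.one_rpow, one_mul]

section Haar

variable {E : Type*} [NormedAddCommGroup E] [NormedSpace ℝ E] [MeasurableSpace E] [BorelSpace E]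
  [FiniteDimensional ℝ E] (μ : Measure E) [μ.IsAddHaarMeasure]

theorem integrable_gagliardoKernel_norm {s q : ℝ} (hsq₀ : 0 < s * q) (hsq₁ : s * q < q) :
    Integrable (fun z : E => gagliardoKernel (finrank ℝ E) s q ‖z‖) μ := by
  cases subsingleton_or_nontrivial E with
  | inl _ =>
    simp [Subsingleton.elim _ (0 : E), gagliardoKernel_zero _ s (hsq₀.trans hsq₁).ne']
  | inr _ =>
    rw [integrable_fun_norm_addHaar μ]
    exact integrableOn_Ioi_pow_mul_gagliardoKernel finrank_pos hsq₀ hsq₁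

theorem lintegral_comp_inv_smul_sub (f : E → ENNReal) (x : E) {r : ℝ} (hr : 0 < r) :
    ∫⁻ y, f (r⁻¹ • (y - x)) ∂μ = ENNReal.ofReal (r ^ finrank ℝ E) * ∫⁻ z, f z ∂μ := by
  have hmap := lintegral_map_equiv f (MeasurableEquiv.smul₀ r⁻¹ (inv_ne_zero hr.ne')) (μ := μ)
  rw [MeasurableEquiv.coe_smul₀] at hmap
  rw [lintegral_sub_right_eq_self (fun y => f (r⁻¹ • y)) x, ← hmap,
    Measure.map_addHaar_smul μ (inv_ne_zero hr.ne'), lintegral_smul_measure, inv_pow, inv_inv,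
    abs_of_pos (by positivity), smul_eq_mul]

theorem measurable_rescaledGagliardoKernel (S : Set E) (n : ℕ) (s q : ℝ) :
    Measurable fun p : E × E => rescaledGagliardoKernel S n s q p.1 p.2 := by
  unfold rescaledGagliardoKernel
  fun_prop

theorem lintegral_rescaledGagliardoKernel_le (S : Set E) (s : ℝ) {q : ℝ} (hq : q ≠ 0) (x : E) :
    ∫⁻ y, ENNReal.ofReal (rescaledGagliardoKernel S (finrank ℝ E) s q x y) ∂μ
      ≤ ∫⁻ z, ENNReal.ofReal (gagliardoKernel (finrank ℝ E) s q ‖z‖) ∂μ := by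
  unfold rescaledGagliardoKernel
  rcases (infDist_nonneg (x := x) (s := S)).eq_or_lt with hr | hr
  · simp [← hr, gagliardoKernel_zero _ s hq]
  set r := infDist x S
  have hdist : ∀ y, dist x y / r = ‖r⁻¹ • (y - x)‖ := fun y => by
    rw [norm_smul, norm_inv, Real.norm_of_nonneg hr.le, dist_comm, dist_eq_norm, inv_mul_eq_div]
  have hpow : 0 < r ^ finrank ℝ E := pow_pos hr _
  simp_rw [hdist, div_eq_mul_inv _ (r ^ _),
    ENNReal.ofReal_mul (gagliardoKernel_nonneg _ _ _ (norm_nonneg _))]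
  rw [lintegral_comp_inv_smul_sub μ (fun z => ENNReal.ofReal (gagliardoKernel _ s q ‖z‖)
      * ENNReal.ofReal (r ^ finrank ℝ E)⁻¹) x hr,
    lintegral_mul_const' _ _ ENNReal.ofReal_ne_top, mul_comm, mul_assoc,
    ← ENNReal.ofReal_mul (inv_pos.2 hpow).le, inv_mul_cancel₀ hpow.ne', ENNReal.ofReal_one, mul_one]

theorem lintegral_prod_rescaledGagliardoKernel_le (S A : Set E) (s : ℝ) {q : ℝ} (hq : q ≠ 0) :
    ∫⁻ p, ENNReal.ofReal (rescaledGagliardoKernel S (finrank ℝ E) s q p.1 p.2)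
        ∂((μ.restrict A).prod (μ.restrict A))
      ≤ (∫⁻ z, ENNReal.ofReal (gagliardoKernel (finrank ℝ E) s q ‖z‖) ∂μ) * μ A := by
  rw [lintegral_prod _ (measurable_rescaledGagliardoKernel S _ s q).ennreal_ofReal.aemeasurable,
    ← setLIntegral_const]
  exact lintegral_mono fun x => (setLIntegral_le_lintegral A _).trans
    (lintegral_rescaledGagliardoKernel_le μ S s hq x)

theorem lintegral_gagliardo_infDist_rpow_lt_top (S A : Set E) {s q : ℝ} (hs : s ∈ Ioo 0 1)
    (hq : 0 < q) (hA : μ A ≠ ⊤) :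
    ∫⁻ p in A ×ˢ A, ENNReal.ofReal (|infDist p.1 S ^ s - infDist p.2 S ^ s| ^ q /
        dist p.1 p.2 ^ ((finrank ℝ E : ℝ) + s * q)) ∂(μ.prod μ) < ⊤ := by
  set F : E → E → ENNReal := fun x y =>
    ENNReal.ofReal (rescaledGagliardoKernel S (finrank ℝ E) s q x y)
  set I := ∫⁻ z, ENNReal.ofReal (gagliardoKernel (finrank ℝ E) s q ‖z‖) ∂μ
  have hI : I < ⊤ := (integrable_gagliardoKernel_norm μ (mul_pos hs.1 hq)
    (mul_lt_of_lt_one_left hq hs.2)).lintegral_lt_top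
  have hpoint : ∀ p : E × E, ENNReal.ofReal (|infDist p.1 S ^ s - infDist p.2 S ^ s| ^ q /
      dist p.1 p.2 ^ ((finrank ℝ E : ℝ) + s * q)) ≤ F p.1 p.2 + F p.2 p.1 := fun ⟨x, y⟩ => by
    rcases le_total (infDist y S) (infDist x S) with h | h
    · exact (ENNReal.ofReal_le_ofReal
        (gagliardo_integrand_infDist_rpow_le S _ hs.1.le hs.2.le hq h)).trans le_self_add
    · rw [abs_sub_comm, dist_comm]
      exact (ENNReal.ofReal_le_ofReal
        (gagliardo_integrand_infDist_rpow_le S _ hs.1.le hs.2.le hq h)).trans le_add_self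
  have hhalf := lintegral_prod_rescaledGagliardoKernel_le μ S A s hq.ne'
  rw [← Measure.prod_restrict]
  calc _ ≤ ∫⁻ p, F p.1 p.2 + F p.2 p.1 ∂((μ.restrict A).prod (μ.restrict A)) :=
        lintegral_mono hpoint
    _ = ∫⁻ p, F p.1 p.2 ∂((μ.restrict A).prod (μ.restrict A))
          + ∫⁻ p, F p.1 p.2 ∂((μ.restrict A).prod (μ.restrict A)) := by
        rw [lintegral_add_left (measurable_rescaledGagliardoKernel S _ s q).ennreal_ofReal]
        congr 1
        exact lintegral_prod_swap (fun p : E × E => F p.1 p.2)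
    _ ≤ I * μ A + I * μ A := add_le_add hhalf hhalf
    _ < ⊤ := ENNReal.add_lt_top.2 ⟨ENNReal.mul_lt_top hI hA.lt_top, ENNReal.mul_lt_top hI hA.lt_top⟩

end Haar

theorem stmt18_general (N : ℕ) (s q : ℝ) (hs : s ∈ Set.Ioo (0 : ℝ) 1) (hq : 1 < q)
    (Ω Ω' : Set (EuclideanSpace ℝ (Fin N)))
    (hb' : Bornology.IsBounded Ω') :
    (∫⁻ p in Ω' ×ˢ Ω',
        ENNReal.ofReal
          (|infDist p.1 Ωᶜ ^ s - infDist p.2 Ωᶜ ^ s| ^ q /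
            dist p.1 p.2 ^ ((N : ℝ) + s * q))) < ⊤ := by
  have := lintegral_gagliardo_infDist_rpow_lt_top volume Ωᶜ Ω' hs (zero_lt_one.trans hq)
    hb'.measure_lt_top.ne
  rwa [finrank_euclideanSpace_fin, ← Measure.volume_eq_prod] at this

/-- Finiteness of the Gagliardo `W^{s,q}`-seminorm of `d_Ω^s` when `sq < 1`. -/
theorem stmt18 (N : ℕ) (s q : ℝ) (hs : s ∈ Set.Ioo (0 : ℝ) 1) (hq : 1 < q)
    (hsq : s * q < 1)
    (Ω Ω' : Set (EuclideanSpace ℝ (Fin N)))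
    (hΩ : IsOpen Ω) (hb : Bornology.IsBounded Ω)
    (hΩ' : IsOpen Ω') (hb' : Bornology.IsBounded Ω') (hsub : Ω ⊆ Ω') :
    (∫⁻ p in Ω' ×ˢ Ω',
        ENNReal.ofReal
          (|infDist p.1 Ωᶜ ^ s - infDist p.2 Ωᶜ ^ s| ^ q /
            dist p.1 p.2 ^ ((N : ℝ) + s * q))) < ⊤ :=
  stmt18_general N s q hs hq Ω Ω' hb'
end
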